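/- arXiv:2412.10108 — 3 statements merged into one kernel-verified Lean document; each statement's English description precedes it below -/
import Mathlib

section
/- Let ε > 0, c > 0 and 0 < a < b. For each natural number n ≥ 1 let λₙ ∈ (0, ε(nπ/c)²) satisfy the flat characteristic equation tanh(a·√((nπ/c)² − λₙ/ε))/√((nπ/c)² − λₙ/ε) = tanh(b·√((nπ/c)² + λₙ/ε))/√((nπ/c)² + λₙ/ε). Then λₙ → 0 as n → ∞; in fact n²·αₙ → 0, where αₙ = (λₙ/ε)·(c/(nπ))². -/
open Real Filter Topology

/-!
Write `k = nπ/c`, `μ = λₙ/ε`, `s = √(k² - μ)` and `t = √(k² + μ)`. Since `tanh (b t) ≤ 1`, the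
characteristic equation gives `t tanh (a s) ≤ s`. Together with `tanh x ≥ x / (1 + x)` this forces
`a s ≥ a k - 1`, and together with `1 - tanh x ≤ 2 e^{-2x}` and `t² - s² = 2μ` it gives
`μ ≤ t (t - s) ≤ t² (1 - tanh (a s)) ≤ 4 k² e^{2 - 2ak}`, which tends to `0` as `k → ∞`.
Finally `n² αₙ = μ (c/π)²`.
-/

namespace Real

theorem one_sub_tanh_le (x : ℝ) : 1 - tanh x ≤ 2 * exp (-(2 * x)) := by
  have hprod : exp x * exp (-x) = 1 := by rw [← exp_add, add_neg_cancel, exp_zero]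
  have hsq : exp (-(2 * x)) = exp (-x) ^ 2 := by rw [← exp_nat_mul]; ring_nf
  rw [tanh_eq, hsq, sub_le_comm, le_div_iff₀ (by positivity)]
  nlinarith [exp_pos x, exp_pos (-x)]

/-- Equivalent to `1 + 2x ≤ e^{2x}`. -/
theorem div_one_add_le_tanh {x : ℝ} (hx : 0 ≤ x) : x / (1 + x) ≤ tanh x := by
  have hexp : 2 * x + 1 ≤ exp (2 * x) := add_one_le_exp _
  have hsq : exp (2 * x) = exp x ^ 2 := by rw [← exp_nat_mul]; ring_nf
  have hprod : exp x * exp (-x) = 1 := by rw [← exp_add, add_neg_cancel, exp_zero]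
  rw [tanh_eq, div_le_div_iff₀ (by positivity) (by positivity)]
  nlinarith [exp_pos x, exp_pos (-x)]

end Real

/-- The flat characteristic equation in the variables `k = nπ/c` and `μ = λ/ε`. -/
def FlatCharEq (a b k μ : ℝ) : Prop :=
  tanh (a * √(k ^ 2 - μ)) / √(k ^ 2 - μ) = tanh (b * √(k ^ 2 + μ)) / √(k ^ 2 + μ)

theorem FlatCharEq.le_sq_mul_exp {a b k μ : ℝ} (ha : 0 ≤ a) (hμ : 0 < μ) (hμk : μ < k ^ 2)
    (h : FlatCharEq a b k μ) : μ ≤ 4 * k ^ 2 * exp (2 - 2 * a * k) := by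
  set s := √(k ^ 2 - μ)
  set t := √(k ^ 2 + μ)
  have hs : 0 < s := sqrt_pos.2 (by linarith)
  have ht : 0 < t := sqrt_pos.2 (by positivity)
  have hs2 : s ^ 2 = k ^ 2 - μ := sq_sqrt (by linarith)
  have ht2 : t ^ 2 = k ^ 2 + μ := sq_sqrt (by positivity)
  have hkt : k ≤ t := (le_abs_self k).trans (abs_le_sqrt (by linarith))
  have has : 0 ≤ a * s := mul_nonneg ha hs.le
  have htanh : 0 ≤ tanh (a * s) :=
    (div_nonneg has (by linarith)).trans (div_one_add_le_tanh has)
  have hts : t * tanh (a * s) ≤ s := by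
    have hcross : tanh (a * s) / s = tanh (b * t) / t := h
    rw [div_eq_div_iff hs.ne' ht.ne'] at hcross
    rw [mul_comm, hcross, mul_comm]
    exact mul_le_of_le_one_right hs.le (tanh_lt_one _).le
  have hlow : a * k - 1 ≤ a * s := by
    have hks : k * tanh (a * s) ≤ s := (mul_le_mul_of_nonneg_right hkt htanh).trans hts
    have hdiv := div_one_add_le_tanh has
    rw [div_le_iff₀ (by linarith)] at hdiv
    rcases le_or_gt k 0 with hk | hk
    · nlinarith
    · nlinarith [mul_le_mul_of_nonneg_left hdiv hk.le]
  calc μ ≤ t * (t - s) := by nlinarith [sq_nonneg (t - s)]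
    _ ≤ t ^ 2 * (1 - tanh (a * s)) := by nlinarith
    _ ≤ (2 * k ^ 2) * (2 * exp (-(2 * (a * s)))) :=
        mul_le_mul (by linarith) (one_sub_tanh_le _) (by linarith [tanh_lt_one (a * s)])
          (by positivity)
    _ = 4 * k ^ 2 * exp (-(2 * (a * s))) := by ring
    _ ≤ 4 * k ^ 2 * exp (2 - 2 * a * k) := by
        gcongr
        linarith

theorem tendsto_sq_mul_exp_two_sub_mul_atTop {a : ℝ} (ha : 0 < a) :
    Tendsto (fun k => 4 * k ^ 2 * exp (2 - 2 * a * k)) atTop (𝓝 0) := by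
  have h := ((tendsto_pow_mul_exp_neg_atTop_nhds_zero 2).comp
    (tendsto_id.const_mul_atTop (by positivity : 0 < 2 * a))).const_mul (exp 2 / a ^ 2)
  rw [mul_zero] at h
  refine h.congr fun k => ?_
  rw [Function.comp_apply, id, sub_eq_add_neg, exp_add]
  field_simp
  ring

theorem FlatCharEq.tendsto_zero {ι : Type*} {l : Filter ι} {a b : ℝ} (ha : 0 < a)
    {k μ : ι → ℝ} (hk : Tendsto k l atTop) (hμ : ∀ᶠ i in l, 0 < μ i ∧ μ i < k i ^ 2)
    (h : ∀ᶠ i in l, FlatCharEq a b (k i) (μ i)) : Tendsto μ l (𝓝 0) :=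
  squeeze_zero' (hμ.mono fun _ hi => hi.1.le)
    ((hμ.and h).mono fun _ hi => hi.2.le_sq_mul_exp ha.le hi.1.1 hi.1.2)
    ((tendsto_sq_mul_exp_two_sub_mul_atTop ha).comp hk)

theorem stmt_3_general (ε a b c : ℝ) (hε : 0 < ε) (hc : 0 < c) (ha : 0 < a)
    (lam : ℕ → ℝ)
    (hmem : ∀ n : ℕ, 1 ≤ n → lam n ∈ Set.Ioo (0 : ℝ) (ε * ((n : ℝ) * π / c) ^ 2))
    (heq : ∀ n : ℕ, 1 ≤ n →
      Real.tanh (a * Real.sqrt (((n : ℝ) * π / c) ^ 2 - lam n / ε)) /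
          Real.sqrt (((n : ℝ) * π / c) ^ 2 - lam n / ε)
        = Real.tanh (b * Real.sqrt (((n : ℝ) * π / c) ^ 2 + lam n / ε)) /
          Real.sqrt (((n : ℝ) * π / c) ^ 2 + lam n / ε)) :
    Tendsto lam atTop (nhds 0) ∧
    Tendsto (fun n : ℕ => (n : ℝ) ^ 2 * ((lam n / ε) * (c / ((n : ℝ) * π)) ^ 2))
      atTop (nhds 0) := by
  have hk : Tendsto (fun n : ℕ => (n : ℝ) * π / c) atTop atTop :=
    (tendsto_natCast_atTop_atTop.atTop_mul_const pi_pos).atTop_div_const hc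
  have hμ : Tendsto (fun n => lam n / ε) atTop (𝓝 0) := by
    refine FlatCharEq.tendsto_zero ha hk ?_ ((eventually_ge_atTop 1).mono heq)
    filter_upwards [eventually_ge_atTop 1] with n hn
    obtain ⟨hpos, hlt⟩ := hmem n hn
    exact ⟨div_pos hpos hε, (div_lt_iff₀' hε).2 hlt⟩
  constructor
  · simpa [mul_div_cancel₀ _ hε.ne'] using hμ.const_mul ε
  · have h := hμ.mul_const ((c / π) ^ 2)
    rw [zero_mul] at h
    refine h.congr' ?_
    filter_upwards [eventually_ge_atTop 1] with n hn
    have hn0 : (n : ℝ) ≠ 0 := Nat.cast_ne_zero.2 (by omega)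
    field_simp

/-- For critical contrast ε₊ = ε₋ = ε and 0 < a < b, the positive roots
λₙ ∈ (0, ε(nπ/c)²) of the flat characteristic equation tend to 0; in fact n²·αₙ → 0
where αₙ = (λₙ/ε)(c/(nπ))². -/
theorem stmt_3 (ε a b c : ℝ) (hε : 0 < ε) (hc : 0 < c) (ha : 0 < a) (hab : a < b)
    (lam : ℕ → ℝ)
    (hmem : ∀ n : ℕ, 1 ≤ n → lam n ∈ Set.Ioo (0 : ℝ) (ε * ((n : ℝ) * π / c) ^ 2))
    (heq : ∀ n : ℕ, 1 ≤ n →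
      Real.tanh (a * Real.sqrt (((n : ℝ) * π / c) ^ 2 - lam n / ε)) /
          Real.sqrt (((n : ℝ) * π / c) ^ 2 - lam n / ε)
        = Real.tanh (b * Real.sqrt (((n : ℝ) * π / c) ^ 2 + lam n / ε)) /
          Real.sqrt (((n : ℝ) * π / c) ^ 2 + lam n / ε)) :
    Tendsto lam atTop (nhds 0) ∧
    Tendsto (fun n : ℕ => (n : ℝ) ^ 2 * ((lam n / ε) * (c / ((n : ℝ) * π)) ^ 2))
      atTop (nhds 0) :=
  stmt_3_general ε a b c hε hc ha lam hmem heq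
end

section
/- Let ε₊ > 0, ε₋ > 0, a > 0, b > 0, c > 0. Then the following are equivalent: (i) for every natural number n ≥ 1, ε₋·tanh(a·nπ/c) = ε₊·tanh(b·nπ/c); (ii) ε₊ = ε₋ and a = b. In other words, λ = 0 solves the flat characteristic equation for every transverse mode n if and only if the contrast κ = ε₊/ε₋ equals 1 and a = b. -/
/-!
Since `tanh (n t) → 1` as `n → ∞` for `t > 0`, letting the mode number grow forces `ε₋ = ε₊`;
the mode `n = 1` then reads `tanh (aπ/c) = tanh (bπ/c)`, and `tanh` is injective.
-/

open Real Filter Topology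

theorem Real.tanh_eq_one_sub_two_div (x : ℝ) : tanh x = 1 - 2 / (exp (2 * x) + 1) := by
  have hexp : exp (2 * x) = exp x * exp x := by rw [← exp_add, two_mul]
  have hinv : exp (-x) = (exp x)⁻¹ := exp_neg x
  rw [tanh_eq, hexp, hinv]
  field_simp
  ring

theorem Real.tendsto_tanh_atTop : Tendsto tanh atTop (𝓝 1) := by
  have hexp : Tendsto (fun x : ℝ => exp (2 * x) + 1) atTop atTop :=
    tendsto_atTop_add_const_right _ 1
      (tendsto_exp_atTop.comp (tendsto_id.const_mul_atTop two_pos))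
  have hfrac : Tendsto (fun x : ℝ => 1 - 2 / (exp (2 * x) + 1)) atTop (𝓝 (1 - 0)) :=
    tendsto_const_nhds.sub (hexp.const_div_atTop 2)
  simpa only [← tanh_eq_one_sub_two_div, sub_zero] using hfrac

theorem tendsto_tanh_natCast_mul {r : ℝ} (hr : 0 < r) :
    Tendsto (fun n : ℕ => tanh (n * r)) atTop (𝓝 1) :=
  tendsto_tanh_atTop.comp (tendsto_natCast_atTop_atTop.atTop_mul_const hr)

theorem eq_of_eventually_mul_tanh_natCast_mul_eq {p q r s : ℝ} (hr : 0 < r) (hs : 0 < s)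
    (h : ∀ᶠ n : ℕ in atTop, p * tanh (n * r) = q * tanh (n * s)) : p = q := by
  have hp : Tendsto (fun n : ℕ => p * tanh (n * r)) atTop (𝓝 p) := by
    simpa using (tendsto_tanh_natCast_mul hr).const_mul p
  have hq : Tendsto (fun n : ℕ => q * tanh (n * s)) atTop (𝓝 q) := by
    simpa using (tendsto_tanh_natCast_mul hs).const_mul q
  exact tendsto_nhds_unique (hp.congr' h) hq

theorem stmt_7_general (εp εm a b c : ℝ) (hεp : 0 < εp)
    (ha : 0 < a) (hb : 0 < b) (hc : 0 < c) :
    (∀ n : ℕ, 1 ≤ n →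
        εm * Real.tanh (a * ((n : ℝ) * π / c)) = εp * Real.tanh (b * ((n : ℝ) * π / c)))
      ↔ (εp = εm ∧ a = b) := by
  constructor
  · intro h
    have hmode : ∀ n : ℕ, 1 ≤ n →
        εm * tanh (n * (a * π / c)) = εp * tanh (n * (b * π / c)) := by
      intro n hn
      convert h n hn using 3 <;> ring
    have hε : εm = εp := eq_of_eventually_mul_tanh_natCast_mul_eq (by positivity)
      (by positivity) (eventually_atTop.mpr ⟨1, hmode⟩)
    have hfirst := hmode 1 le_rfl
    rw [hε, Nat.cast_one, one_mul, one_mul] at hfirst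
    have hab : a * π / c = b * π / c :=
      tanh_injective (mul_left_cancel₀ hεp.ne' hfirst)
    exact ⟨hε.symm, mul_right_cancel₀ pi_ne_zero ((div_left_inj' hc.ne').mp hab)⟩
  · rintro ⟨rfl, rfl⟩ n _
    rfl

/-- λ = 0 solves the flat characteristic equation for every transverse
mode n ≥ 1 if and only if the contrast is critical (ε₊ = ε₋) and a = b. -/
theorem stmt_7 (εp εm a b c : ℝ) (hεp : 0 < εp) (hεm : 0 < εm)
    (ha : 0 < a) (hb : 0 < b) (hc : 0 < c) :
    (∀ n : ℕ, 1 ≤ n →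
        εm * Real.tanh (a * ((n : ℝ) * π / c)) = εp * Real.tanh (b * ((n : ℝ) * π / c)))
      ↔ (εp = εm ∧ a = b) :=
  stmt_7_general εp εm a b c hεp ha hb hc
end

section
/- For every x > 0: 1 − x ≤ exp(−arctan(sinh x)); moreover, for every x ∈ (0,1): exp(−arctan(sinh x)) ≤ 1 − x/2. -/
/-!
Write `g x = exp (-arctan (sinh x))`, so that `g' = -g / cosh`. Since `arctan (sinh x) ≤ x` for
`x ≥ 0` (its derivative `1 / cosh x` is at most `1`), the bound `1 + t ≤ exp t` gives `1 - x ≤ g x`.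
On `[0, ∞)` both `g` and `1 / cosh` are positive and decreasing, so `g'` increases and `g` is
convex; on `[0, 1]` it therefore lies below its chord, and `g 1 ≤ 1 / 2` because
`arctan (sinh 1) ≥ arctan 1 = π / 4 > log 2`.
-/

open Real Set

theorem hasDerivAt_arctan_sinh (x : ℝ) :
    HasDerivAt (fun x => arctan (sinh x)) (cosh x)⁻¹ x := by
  refine ((hasDerivAt_arctan (sinh x)).comp x (hasDerivAt_sinh x)).congr_deriv ?_
  rw [← cosh_sq']
  field_simp [(cosh_pos x).ne']

theorem arctan_sinh_le_self {x : ℝ} (hx : 0 ≤ x) : arctan (sinh x) ≤ x := by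
  have hderiv (y : ℝ) : HasDerivAt (fun x => x - arctan (sinh x)) (1 - (cosh y)⁻¹) y :=
    (hasDerivAt_id y).sub (hasDerivAt_arctan_sinh y)
  have hmono : Monotone fun x => x - arctan (sinh x) := by
    refine monotone_of_deriv_nonneg (fun y => (hderiv y).differentiableAt) fun y => ?_
    rw [(hderiv y).deriv, sub_nonneg]
    exact inv_le_one_of_one_le₀ (one_le_cosh y)
  simpa using hmono hx

theorem one_sub_le_exp_neg_arctan_sinh {x : ℝ} (hx : 0 ≤ x) :
    1 - x ≤ exp (-arctan (sinh x)) := by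
  linarith [add_one_le_exp (-arctan (sinh x)), arctan_sinh_le_self hx]

theorem hasDerivAt_exp_neg_arctan_sinh (x : ℝ) :
    HasDerivAt (fun x => exp (-arctan (sinh x))) (-(exp (-arctan (sinh x)) / cosh x)) x := by
  refine ((hasDerivAt_arctan_sinh x).neg.exp).congr_deriv ?_
  simp only [Pi.neg_apply]
  ring

theorem antitone_exp_neg_arctan_sinh : Antitone fun x => exp (-arctan (sinh x)) :=
  fun _ _ hab => exp_le_exp.2 <| neg_le_neg <| arctan_strictMono.monotone <| sinh_le_sinh.2 hab

theorem convexOn_exp_neg_arctan_sinh : ConvexOn ℝ (Ici 0) fun x => exp (-arctan (sinh x)) := by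
  refine MonotoneOn.convexOn_of_deriv (convex_Ici 0) (by fun_prop)
    (fun y _ => (hasDerivAt_exp_neg_arctan_sinh y).differentiableAt.differentiableWithinAt) ?_
  intro a ha b hb hab
  rw [interior_Ici] at ha hb
  rw [(hasDerivAt_exp_neg_arctan_sinh a).deriv, (hasDerivAt_exp_neg_arctan_sinh b).deriv,
    neg_le_neg_iff]
  have hcosh : cosh a ≤ cosh b := by
    rwa [cosh_le_cosh, abs_of_pos ha, abs_of_pos hb]
  exact div_le_div₀ (exp_pos _).le (antitone_exp_neg_arctan_sinh hab) (cosh_pos a) hcosh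

theorem exp_neg_arctan_sinh_one_le : exp (-arctan (sinh 1)) ≤ 1 / 2 := by
  have hlog : log 2 ≤ arctan (sinh 1) := by
    have hquarter : π / 4 ≤ arctan (sinh 1) := by
      rw [← arctan_one]
      exact arctan_strictMono.monotone (self_le_sinh_iff.2 zero_le_one)
    linarith [log_two_lt_d9, pi_gt_three]
  calc exp (-arctan (sinh 1)) ≤ exp (-log 2) := exp_le_exp.2 (neg_le_neg hlog)
    _ = 1 / 2 := by rw [exp_neg, exp_log two_pos, one_div]

theorem exp_neg_arctan_sinh_le_one_sub_half {x : ℝ} (hx₀ : 0 ≤ x) (hx₁ : x ≤ 1) :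
    exp (-arctan (sinh x)) ≤ 1 - x / 2 := by
  have hchord := convexOn_exp_neg_arctan_sinh.2 self_mem_Ici
    (mem_Ici.2 zero_le_one) (sub_nonneg.2 hx₁) hx₀ (sub_add_cancel 1 x)
  simp only [smul_eq_mul, mul_zero, mul_one, zero_add, sinh_zero, arctan_zero, neg_zero,
    exp_zero] at hchord
  nlinarith [exp_neg_arctan_sinh_one_le]

/-- For every x > 0, 1 − x ≤ exp(−arctan(sinh x)); and for every
x ∈ (0,1), exp(−arctan(sinh x)) ≤ 1 − x/2. -/
theorem stmt_17 :
    (∀ x : ℝ, 0 < x → 1 - x ≤ Real.exp (-Real.arctan (Real.sinh x))) ∧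
    (∀ x ∈ Set.Ioo (0 : ℝ) 1, Real.exp (-Real.arctan (Real.sinh x)) ≤ 1 - x / 2) :=
  ⟨fun _ hx => one_sub_le_exp_neg_arctan_sinh hx.le,
    fun _ hx => exp_neg_arctan_sinh_le_one_sub_half hx.1.le hx.2.le⟩
end
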